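/- arXiv:2001.10967 — 2 statements merged into one kernel-verified Lean document; each statement's English description precedes it below -/
import Mathlib

section
/- Let A be a skew left brace and M a maximal ideal of A. Then either [A,A]₊ + A⁽²⁾ ⊆ M or Soc(A) ⊆ M. In particular, A⁽²⁾ ∩ Soc(A) ⊆ Rad(A). -/
/-- A skew left brace: `(A,+)` and `(A,∘)` (written `*`) are groups with
`a ∘ (b + c) = a ∘ b - a + a ∘ c`. -/
class SkewBrace (A : Type*) extends AddGroup A, Group A where
  compat : ∀ a b c : A, a * (b + c) = a * b + (-a + a * c)

namespace SkewBrace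

variable {A : Type*}

/-- `λ_a (b) = -a + a ∘ b`. -/
def lam [SkewBrace A] (a b : A) : A := -a + a * b

/-- `a * b = λ_a(b) - b = -a + a∘b - b` (the brace star operation). -/
def star [SkewBrace A] (a b : A) : A := -a + a * b - b

/-- An ideal of a skew left brace: a subgroup of `(A,+)`, normal in `(A,+)` and
`(A,∘)`, and invariant under all `λ_a`. -/
structure Ideal (A : Type*) [SkewBrace A] where
  carrier : Set A
  zero_mem : (0 : A) ∈ carrier
  add_mem : ∀ ⦃a b : A⦄, a ∈ carrier → b ∈ carrier → a + b ∈ carrier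
  neg_mem : ∀ ⦃a : A⦄, a ∈ carrier → -a ∈ carrier
  add_conj_mem : ∀ (a : A) ⦃b : A⦄, b ∈ carrier → a + b + -a ∈ carrier
  mul_conj_mem : ∀ (a : A) ⦃b : A⦄, b ∈ carrier → a * b * a⁻¹ ∈ carrier
  lam_mem : ∀ (a : A) ⦃b : A⦄, b ∈ carrier → lam a b ∈ carrier

/-- The ideal generated by a set, as a set. -/
def genIdeal [SkewBrace A] (S : Set A) : Set A :=
  {x | ∀ I : Ideal A, S ⊆ I.carrier → x ∈ I.carrier}

/-- A maximal ideal: a proper ideal such that the only ideals containing it are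
itself and the whole brace. -/
def Ideal.IsMaximal [SkewBrace A] (M : Ideal A) : Prop :=
  M.carrier ≠ Set.univ ∧
    ∀ J : Ideal A, M.carrier ⊆ J.carrier → J.carrier = M.carrier ∨ J.carrier = Set.univ

/-- The radical: the intersection of all maximal ideals (the whole brace if there
are none). -/
def radical (A : Type*) [SkewBrace A] : Set A :=
  {x | ∀ M : Ideal A, M.IsMaximal → x ∈ M.carrier}

/-- The set of all elements `a * b` (star). -/
def starSet (A : Type*) [SkewBrace A] : Set A := {x | ∃ a b : A, star a b = x}

/-- `A⁽²⁾` as the ideal generated by all `a * b`. -/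
def sq (A : Type*) [SkewBrace A] : Set A := genIdeal (starSet A)

/-- `A⁽²⁾` as the additive subgroup generated by all `a * b`. -/
def sqAdd (A : Type*) [SkewBrace A] : Set A := (AddSubgroup.closure (starSet A) : Set A)

open scoped Classical in
/-- The weight of a skew left brace: the minimal number of elements generating it
as an ideal (with `ω(0) = 1` by convention). -/
noncomputable def weight (A : Type*) [SkewBrace A] : ℕ∞ :=
  if Subsingleton A then 1
  else ⨅ (S : Finset A) (_ : genIdeal (S : Set A) = Set.univ), (S.card : ℕ∞)

/-- Artinian: every descending chain of ideals is eventually stationary. -/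
def IsArtinian (A : Type*) [SkewBrace A] : Prop :=
  ∀ f : ℕ → Ideal A, (∀ n, (f (n + 1)).carrier ⊆ (f n).carrier) →
    ∃ N, ∀ n, N ≤ n → (f n).carrier = (f N).carrier

/-- A homomorphism of skew left braces. -/
structure BraceHom (A B : Type*) [SkewBrace A] [SkewBrace B] where
  toFun : A → B
  map_add' : ∀ x y, toFun (x + y) = toFun x + toFun y
  map_mul' : ∀ x y, toFun (x * y) = toFun x * toFun y

/-- The kernel of a brace homomorphism. -/
def BraceHom.ker {A B : Type*} [SkewBrace A] [SkewBrace B] (f : BraceHom A B) : Set A :=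
  {a | f.toFun a = 0}

/-- The socle `Soc(A) = Ker λ ∩ Z(A,+)`. -/
def Soc (A : Type*) [SkewBrace A] : Set A :=
  {a | (∀ b : A, lam a b = b) ∧ ∀ b : A, a + b = b + a}

/-- The annihilator `Ann(A) = Soc(A) ∩ Z(A,∘)`. -/
def ann (A : Type*) [SkewBrace A] : Set A :=
  {a | (∀ b : A, lam a b = b) ∧ (∀ b : A, a + b = b + a) ∧ (∀ b : A, a * b = b * a)}

/-- A simple skew left brace: it has exactly two ideals, `0` and itself. -/
def IsSimple (A : Type*) [SkewBrace A] : Prop :=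
  (∃ x y : A, x ≠ y) ∧ ∀ I : Ideal A, I.carrier = {(0 : A)} ∨ I.carrier = Set.univ

/-- A prime ideal `P`: the quotient `A/P` is a prime brace; internally, for all
ideals `I, J ⊇ P` with `I * J ⊆ P`, one of `I, J` equals `P`. -/
def Ideal.IsPrime [SkewBrace A] (P : Ideal A) : Prop :=
  ∀ I J : Ideal A, P.carrier ⊆ I.carrier → P.carrier ⊆ J.carrier →
    (∀ i ∈ I.carrier, ∀ j ∈ J.carrier, star i j ∈ P.carrier) →
    I.carrier ⊆ P.carrier ∨ J.carrier ⊆ P.carrier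

end SkewBrace

namespace SkewBrace

section AuxLemmas
variable {A : Type*} [SkewBrace A]

lemma sb_mul_zero (a : A) : a * 0 = a := by
  have h := compat a (0:A) 0
  rw [add_zero] at h
  have h2 : -a + a * 0 = 0 := by
    have := h.symm
    rwa [add_eq_left] at this
  have := congrArg (a + ·) h2
  simpa [add_neg_cancel_left] using this

lemma one_eq_zero : (1 : A) = 0 := by
  have h := sb_mul_zero (1 : A)
  rw [one_mul] at h; exact h.symm

lemma lam_add (a b c : A) : lam a (b + c) = lam a b + lam a c := by
  unfold lam; rw [compat]; simp [add_assoc]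

lemma lam_zero (a : A) : lam a 0 = 0 := by
  unfold lam; rw [sb_mul_zero, neg_add_cancel]

lemma lam_neg (a b : A) : lam a (-b) = -(lam a b) := by
  have h : lam a b + lam a (-b) = 0 := by
    rw [← lam_add, add_neg_cancel, lam_zero]
  exact eq_neg_of_add_eq_zero_right h

lemma mul_eq_add_lam (a b : A) : a * b = a + lam a b := by
  unfold lam; rw [add_neg_cancel_left]

lemma lam_mul (a b c : A) : lam (a * b) c = lam a (lam b c) := by
  rw [show lam b c = -b + b * c from rfl, lam_add, lam_neg]
  unfold lam
  rw [mul_assoc]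
  simp [neg_add_rev, add_assoc]

lemma lam_one (b : A) : lam (1 : A) b = b := by
  unfold lam; rw [one_mul, one_eq_zero, neg_zero, zero_add]

lemma lam_lam_inv (a b : A) : lam a (lam a⁻¹ b) = b := by
  rw [← lam_mul, mul_inv_cancel, lam_one]

lemma lam_inv_lam (a b : A) : lam a⁻¹ (lam a b) = b := by
  rw [← lam_mul, inv_mul_cancel, lam_one]

lemma soc_mul {s : A} (h : ∀ b : A, lam s b = b) (b : A) : s * b = s + b := by
  rw [mul_eq_add_lam, h]

lemma lam_central {s : A} (hc : ∀ b : A, s + b = b + s) (a x : A) :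
    lam a s + x = x + lam a s := by
  have h : lam a s + lam a (lam a⁻¹ x) = lam a (lam a⁻¹ x) + lam a s := by
    rw [← lam_add, ← lam_add, hc]
  rwa [lam_lam_inv] at h

lemma central_neg {s : A} (hc : ∀ b : A, s + b = b + s) (b : A) :
    -s + b = b + -s := by
  calc -s + b = -s + b + (s + -s) := by rw [add_neg_cancel, add_zero]
  _ = -s + (b + s) + -s := by simp [add_assoc]
  _ = -s + (s + b) + -s := by rw [hc]
  _ = b + -s := by rw [neg_add_cancel_left]

lemma cancel_central {s : A} (hc : ∀ b : A, s + b = b + s) (x : A) :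
    s + x + -s = x := by
  rw [hc x]; exact add_neg_cancel_right x s

lemma conj_soc_eq_lam {s : A} (hs : s ∈ Soc A) (a : A) : a * s * a⁻¹ = lam a s := by
  calc a * s * a⁻¹ = a * (s * a⁻¹) := mul_assoc a s a⁻¹
  _ = a * (s + a⁻¹) := by rw [soc_mul hs.1]
  _ = a * s + (-a + a * a⁻¹) := compat a s a⁻¹
  _ = a * s + -a := by rw [mul_inv_cancel, one_eq_zero, add_zero]
  _ = (a + lam a s) + -a := by rw [← mul_eq_add_lam]
  _ = (lam a s + a) + -a := by rw [← lam_central hs.2 a a]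
  _ = lam a s := add_neg_cancel_right _ _

lemma soc_lam_mem {s : A} (hs : s ∈ Soc A) (a : A) : lam a s ∈ Soc A := by
  refine ⟨fun b => ?_, fun b => lam_central hs.2 a b⟩
  calc lam (lam a s) b = lam (a * s * a⁻¹) b := by rw [conj_soc_eq_lam hs]
  _ = lam a (lam s (lam a⁻¹ b)) := by rw [lam_mul, lam_mul]
  _ = lam a (lam a⁻¹ b) := by rw [hs.1]
  _ = b := lam_lam_inv a b

lemma soc_zero : (0 : A) ∈ Soc A := by
  refine ⟨fun b => ?_, fun b => by rw [zero_add, add_zero]⟩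
  rw [← one_eq_zero, lam_one]

lemma soc_add {s t : A} (hs : s ∈ Soc A) (ht : t ∈ Soc A) : s + t ∈ Soc A := by
  refine ⟨fun b => ?_, fun b => ?_⟩
  · rw [← soc_mul hs.1 t, lam_mul, ht.1, hs.1]
  · rw [add_assoc, ht.2 b, ← add_assoc, hs.2 b, add_assoc]

lemma soc_neg {s : A} (hs : s ∈ Soc A) : -s ∈ Soc A := by
  have hinv : s⁻¹ = -s := by
    apply inv_eq_of_mul_eq_one_right
    rw [soc_mul hs.1, add_neg_cancel, one_eq_zero]
  refine ⟨fun b => ?_, fun b => central_neg hs.2 b⟩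
  rw [← hinv]
  conv_lhs => rw [← hs.1 b]
  exact lam_inv_lam s b

lemma red1 {s : A} (hc : ∀ b : A, s + b = b + s) (m b : A) :
    (s + m) + b - (s + m) - b = m + b - m - b := by
  have h : s + (m + b + -m) + -s = m + b + -m := cancel_central hc _
  calc (s + m) + b - (s + m) - b = s + (m + b + -m) + -s + -b := by
        simp [sub_eq_add_neg, neg_add_rev, add_assoc]
  _ = (m + b + -m) + -b := by rw [h]
  _ = m + b - m - b := by simp [sub_eq_add_neg]

lemma red2 {s' : A} (hc' : ∀ b : A, s' + b = b + s') (m m' : A) :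
    m + (s' + m') - m - (s' + m') = m + m' - m - m' := by
  have h : s' + (m + m' + -m + -m') + -s' = m + m' + -m + -m' := cancel_central hc' _
  calc m + (s' + m') - m - (s' + m')
      = (m + s') + m' - m - (s' + m') := by rw [add_assoc]
  _ = (s' + m) + m' - m - (s' + m') := by rw [← hc' m]
  _ = s' + (m + m' + -m + -m') + -s' := by
        simp [sub_eq_add_neg, neg_add_rev, add_assoc]
  _ = m + m' + -m + -m' := h
  _ = m + m' - m - m' := by simp [sub_eq_add_neg]

lemma star_eq_lam_sub (a b : A) : star a b = lam a b - b := rfl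

end AuxLemmas

/-- The commutator subgroup `[A,A]₊` of `(A,+)`. -/
def addCommutator (A : Type*) [SkewBrace A] : AddSubgroup A :=
  AddSubgroup.closure {x : A | ∃ a b : A, a + b - a - b = x}

/-- Gaschütz analog: for each maximal ideal `M`,
`[A,A]₊ + A⁽²⁾ ⊆ M` or `Soc(A) ⊆ M`; in particular `A⁽²⁾ ∩ Soc(A) ⊆ Rad(A)`. -/
theorem gaschutz (A : Type*) [SkewBrace A] :
    (∀ M : Ideal A, M.IsMaximal →
      ((addCommutator A ⊔ AddSubgroup.closure (starSet A) : AddSubgroup A) : Set A)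
          ⊆ M.carrier ∨ Soc A ⊆ M.carrier) ∧
    sqAdd A ∩ Soc A ⊆ radical A := by
  have main : ∀ M : Ideal A, M.IsMaximal →
      ((addCommutator A ⊔ AddSubgroup.closure (starSet A) : AddSubgroup A) : Set A)
          ⊆ M.carrier ∨ Soc A ⊆ M.carrier := by
    intro M hM
    by_cases hsoc : Soc A ⊆ M.carrier
    · exact Or.inr hsoc
    left
    obtain ⟨s₀, hs₀, hs₀M⟩ := Set.not_subset.mp hsoc
    have star_mem : ∀ ⦃m : A⦄, m ∈ M.carrier → ∀ b : A, star m b ∈ M.carrier := by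
      intro m hm b
      have hm₁ : b⁻¹ * m * b ∈ M.carrier := by
        have := M.mul_conj_mem b⁻¹ hm
        rwa [inv_inv] at this
      have hmb : m * b = b + lam b (b⁻¹ * m * b) := by
        rw [← mul_eq_add_lam]; group
      have he : star m b = -m + (b + lam b (b⁻¹ * m * b) + -b) := by
        unfold star; rw [hmb]; simp [sub_eq_add_neg, add_assoc]
      rw [he]
      exact M.add_mem (M.neg_mem hm) (M.add_conj_mem b (M.lam_mem b hm₁))
    let J : Ideal A :=
      { carrier := {x | ∃ s ∈ Soc A, ∃ m ∈ M.carrier, x = s + m}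
        zero_mem := ⟨0, soc_zero, 0, M.zero_mem, by rw [add_zero]⟩
        add_mem := by
          rintro _ _ ⟨s, hs, m, hm, rfl⟩ ⟨s', hs', m', hm', rfl⟩
          refine ⟨s + s', soc_add hs hs', m + m', M.add_mem hm hm', ?_⟩
          rw [add_assoc, ← add_assoc m s' m', ← hs'.2 m, add_assoc s' m m', ← add_assoc]
        neg_mem := by
          rintro _ ⟨s, hs, m, hm, rfl⟩
          exact ⟨-s, soc_neg hs, -m, M.neg_mem hm,
            by rw [neg_add_rev, ← central_neg hs.2 (-m)]⟩
        add_conj_mem := by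
          intro a b hb
          obtain ⟨s, hs, m, hm, rfl⟩ := hb
          refine ⟨s, hs, a + m + -a, M.add_conj_mem a hm, ?_⟩
          rw [← add_assoc a s m, ← hs.2 a, add_assoc s a m, add_assoc]
        mul_conj_mem := by
          intro a b hb
          obtain ⟨s, hs, m, hm, rfl⟩ := hb
          refine ⟨lam a s, soc_lam_mem hs a, a * m * a⁻¹, M.mul_conj_mem a hm, ?_⟩
          rw [← soc_mul hs.1 m]
          calc a * (s * m) * a⁻¹ = (a * s * a⁻¹) * (a * m * a⁻¹) := by group
          _ = lam a s * (a * m * a⁻¹) := by rw [conj_soc_eq_lam hs]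
          _ = lam a s + a * m * a⁻¹ := soc_mul (soc_lam_mem hs a).1 _
        lam_mem := by
          intro a b hb
          obtain ⟨s, hs, m, hm, rfl⟩ := hb
          exact ⟨lam a s, soc_lam_mem hs a, lam a m, M.lam_mem a hm, lam_add a s m⟩ }
    have hMJ : M.carrier ⊆ J.carrier := fun x hx => ⟨0, soc_zero, x, hx, (zero_add x).symm⟩
    have hJuniv : J.carrier = Set.univ := by
      rcases hM.2 J hMJ with h | h
      · exact absurd (h ▸ (⟨s₀, hs₀, 0, M.zero_mem, (add_zero s₀).symm⟩ : s₀ ∈ J.carrier)) hs₀M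
      · exact h
    have decomp : ∀ a : A, ∃ s ∈ Soc A, ∃ m ∈ M.carrier, a = s + m := by
      intro a
      have ha : a ∈ J.carrier := by rw [hJuniv]; trivial
      exact ha
    let Ms : AddSubgroup A :=
      { carrier := M.carrier
        add_mem' := fun ha hb => M.add_mem ha hb
        zero_mem' := M.zero_mem
        neg_mem' := fun ha => M.neg_mem ha }
    have hcomm : addCommutator A ≤ Ms := by
      refine (AddSubgroup.closure_le Ms).mpr ?_
      rintro x ⟨a, b, rfl⟩
      obtain ⟨s, hs, m, hm, rfl⟩ := decomp a
      obtain ⟨s', hs', m', hm', rfl⟩ := decomp b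
      show (s + m) + (s' + m') - (s + m) - (s' + m') ∈ M.carrier
      rw [red1 hs.2, red2 hs'.2, sub_eq_add_neg, sub_eq_add_neg]
      exact M.add_mem (M.add_mem (M.add_mem hm hm') (M.neg_mem hm)) (M.neg_mem hm')
    have hstarle : AddSubgroup.closure (starSet A) ≤ Ms := by
      refine (AddSubgroup.closure_le Ms).mpr ?_
      rintro x ⟨a, b, rfl⟩
      obtain ⟨s, hs, m, hm, rfl⟩ := decomp a
      show star (s + m) b ∈ M.carrier
      have hred : star (s + m) b = star m b := by
        rw [star_eq_lam_sub, star_eq_lam_sub, ← soc_mul hs.1 m, lam_mul, hs.1]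
      rw [hred]
      exact star_mem hm b
    exact fun x hx => sup_le hcomm hstarle hx
  refine ⟨main, ?_⟩
  rintro x ⟨hx1, hx2⟩ M hM
  rcases main M hM with h | h
  · exact h ((le_sup_right :
      AddSubgroup.closure (starSet A) ≤ addCommutator A ⊔ AddSubgroup.closure (starSet A)) hx1)
  · exact h hx2


end SkewBrace
end

section
/- If A is a skew left brace of finite weight and S ⊆ A, then S generates A as an ideal if and only if the image of S in A/Rad(A) generates A/Rad(A) as an ideal. In particular ω(A) = ω(A/Rad(A)). -/
section Aux

variable {A B : Type*} [SkewBrace A] [SkewBrace B]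

lemma SkewBrace.mul_zero' (a : A) : a * (0 : A) = a := by
  have h := SkewBrace.compat a 0 0
  rw [add_zero] at h
  have h2 : a * (0:A) + 0 = a * 0 + (-a + a * 0) := by rw [add_zero]; exact h
  have h3 := (add_left_cancel h2).symm
  have := congrArg (a + ·) h3
  simpa using this.symm

lemma SkewBrace.one_eq_zero_s12 : (1 : A) = 0 := by
  have := SkewBrace.mul_zero' (1 : A)
  rw [one_mul] at this
  exact this.symm

namespace SkewBrace.BraceHom

lemma map_zero (f : BraceHom A B) : f.toFun 0 = 0 := by
  have h : f.toFun 0 + f.toFun 0 = f.toFun 0 + 0 := by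
    rw [← f.map_add' 0 0, add_zero, add_zero]
  exact add_left_cancel h

lemma map_neg (f : BraceHom A B) (a : A) : f.toFun (-a) = -f.toFun a := by
  have h : f.toFun (-a) + f.toFun a = 0 := by
    rw [← f.map_add', neg_add_cancel, f.map_zero]
  exact eq_neg_of_add_eq_zero_left h

lemma map_one (f : BraceHom A B) : f.toFun 1 = 1 := by
  rw [SkewBrace.one_eq_zero_s12, f.map_zero, SkewBrace.one_eq_zero_s12]

lemma map_inv (f : BraceHom A B) (a : A) : f.toFun a⁻¹ = (f.toFun a)⁻¹ := by
  have h : f.toFun a * f.toFun a⁻¹ = 1 := by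
    rw [← f.map_mul', mul_inv_cancel, f.map_one]
  exact eq_inv_of_mul_eq_one_right h

lemma map_lam (f : BraceHom A B) (a b : A) :
    f.toFun (SkewBrace.lam a b) = SkewBrace.lam (f.toFun a) (f.toFun b) := by
  simp [SkewBrace.lam, f.map_add', f.map_neg, f.map_mul']

end SkewBrace.BraceHom

namespace SkewBrace

lemma subset_genIdeal (S : Set A) : S ⊆ genIdeal S :=
  fun _x hx _I hI => hI hx

lemma genIdeal_subset {S : Set A} {I : Ideal A} (h : S ⊆ I.carrier) :
    genIdeal S ⊆ I.carrier := fun _x hx => hx I h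

/-- The ideal generated by a set, as an `Ideal`. -/
def Ideal.gen (S : Set A) : Ideal A where
  carrier := genIdeal S
  zero_mem := fun I _ => I.zero_mem
  add_mem := fun _ _ ha hb I hI => I.add_mem (ha I hI) (hb I hI)
  neg_mem := fun _ ha I hI => I.neg_mem (ha I hI)
  add_conj_mem := fun a _ hb I hI => I.add_conj_mem a (hb I hI)
  mul_conj_mem := fun a _ hb I hI => I.mul_conj_mem a (hb I hI)
  lam_mem := fun a _ hb I hI => I.lam_mem a (hb I hI)

/-- The zero ideal. -/
def Ideal.zero (A : Type*) [SkewBrace A] : Ideal A where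
  carrier := {0}
  zero_mem := rfl
  add_mem := by rintro a b rfl rfl; simp
  neg_mem := by rintro a rfl; simp
  add_conj_mem := by rintro a b rfl; simp
  mul_conj_mem := by
    rintro a b rfl
    show a * (0:A) * a⁻¹ ∈ ({0} : Set A)
    rw [SkewBrace.mul_zero', mul_inv_cancel, SkewBrace.one_eq_zero_s12]
    rfl
  lam_mem := by
    rintro a b rfl
    show SkewBrace.lam a 0 ∈ ({0} : Set A)
    simp [SkewBrace.lam, SkewBrace.mul_zero']

/-- The preimage of an ideal under a brace homomorphism. -/
def Ideal.comap (f : BraceHom A B) (I : Ideal B) : Ideal A where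
  carrier := f.toFun ⁻¹' I.carrier
  zero_mem := by simp only [Set.mem_preimage, f.map_zero]; exact I.zero_mem
  add_mem := fun a b ha hb => by
    simp only [Set.mem_preimage, f.map_add'] at *
    exact I.add_mem ha hb
  neg_mem := fun a ha => by
    simp only [Set.mem_preimage, f.map_neg] at *
    exact I.neg_mem ha
  add_conj_mem := fun a b hb => by
    simp only [Set.mem_preimage, f.map_add', f.map_neg] at *
    exact I.add_conj_mem _ hb
  mul_conj_mem := fun a b hb => by
    simp only [Set.mem_preimage, f.map_mul', f.map_inv] at *
    exact I.mul_conj_mem _ hb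
  lam_mem := fun a b hb => by
    simp only [Set.mem_preimage, f.map_lam] at *
    exact I.lam_mem _ hb

lemma subsingleton_genIdeal_empty [Subsingleton A] :
    genIdeal (∅ : Set A) = Set.univ := by
  ext x
  simp only [Set.mem_univ, iff_true]
  intro I _
  have : x = 0 := Subsingleton.elim _ _
  rw [this]; exact I.zero_mem

lemma exists_finite_gen (hw : weight A ≠ ⊤) :
    ∃ T : Finset A, genIdeal (↑T : Set A) = Set.univ := by
  by_cases hs : Subsingleton A
  · exact ⟨∅, by simpa using subsingleton_genIdeal_empty⟩
  · by_contra h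
    push_neg at h
    apply hw
    unfold weight
    rw [if_neg hs, iInf_eq_top]
    intro S
    exact iInf_neg (h S)

lemma finset_subset_of_directed {c : Set (Set A)} (hd : DirectedOn (· ⊆ ·) c)
    (hne : c.Nonempty) (T : Finset A) (hT : ↑T ⊆ ⋃₀ c) : ∃ u ∈ c, ↑T ⊆ u := by
  classical
  induction T using Finset.induction_on with
  | empty =>
    obtain ⟨u, hu⟩ := hne
    exact ⟨u, hu, by simp⟩
  | @insert a s ha ih =>
    have hs : (↑s : Set A) ⊆ ⋃₀ c := fun x hx => hT (by simp [hx])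
    obtain ⟨u, hu, hsu⟩ := ih hs
    have haU : a ∈ ⋃₀ c := hT (by simp)
    obtain ⟨v, hv, hav⟩ := haU
    obtain ⟨w, hw, huw, hvw⟩ := hd u hu v hv
    refine ⟨w, hw, ?_⟩
    intro x hx
    rcases Finset.mem_insert.1 (by exact_mod_cast hx) with rfl | hx'
    · exact hvw hav
    · exact huw (hsu hx')

lemma exists_maximal (hfg : ∃ T : Finset A, genIdeal (↑T : Set A) = Set.univ)
    (I : Ideal A) (hI : I.carrier ≠ Set.univ) :
    ∃ M : Ideal A, M.IsMaximal ∧ I.carrier ⊆ M.carrier := by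
  obtain ⟨T, hT⟩ := hfg
  set 𝒮 : Set (Set A) := {C | (∃ J : Ideal A, J.carrier = C) ∧ C ≠ Set.univ} with h𝒮
  have hzorn := zorn_subset_nonempty 𝒮 ?_ I.carrier ⟨⟨I, rfl⟩, hI⟩
  · obtain ⟨m, hIm, hm⟩ := hzorn
    obtain ⟨⟨M, hMm⟩, hmne⟩ := hm.prop
    refine ⟨M, ⟨by rw [hMm]; exact hmne, ?_⟩, by rw [hMm]; exact hIm⟩
    intro J hMJ
    by_cases hJ : J.carrier = Set.univ
    · exact Or.inr hJ
    · left
      have hJ𝒮 : J.carrier ∈ 𝒮 := ⟨⟨J, rfl⟩, hJ⟩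
      have := hm.le_of_ge hJ𝒮 (by rw [hMm] at hMJ; exact hMJ)
      rw [hMm]
      exact le_antisymm this (hMm ▸ hMJ)
  · intro c hc hchain hcne
    have hd : DirectedOn (· ⊆ ·) c := hchain.directedOn
    obtain ⟨u0, hu0⟩ := id hcne
    obtain ⟨⟨J0, hJ0⟩, _⟩ := hc hu0
    refine ⟨⋃₀ c, ⟨⟨?_, ?_⟩, fun s hs x hx => ⟨s, hs, hx⟩⟩⟩
    · -- the union is an ideal
      refine ⟨⟨⋃₀ c, ⟨u0, hu0, hJ0 ▸ J0.zero_mem⟩, ?_, ?_, ?_, ?_, ?_⟩, rfl⟩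
      · rintro a b ⟨u, hu, hau⟩ ⟨v, hv, hbv⟩
        obtain ⟨w, hw, huw, hvw⟩ := hd u hu v hv
        obtain ⟨⟨J, hJ⟩, _⟩ := hc hw
        exact ⟨w, hw, hJ ▸ J.add_mem (hJ ▸ huw hau) (hJ ▸ hvw hbv)⟩
      · rintro a ⟨u, hu, hau⟩
        obtain ⟨⟨J, hJ⟩, _⟩ := hc hu
        exact ⟨u, hu, hJ ▸ J.neg_mem (hJ ▸ hau)⟩
      · rintro a b ⟨u, hu, hbu⟩
        obtain ⟨⟨J, hJ⟩, _⟩ := hc hu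
        exact ⟨u, hu, hJ ▸ J.add_conj_mem a (hJ ▸ hbu)⟩
      · rintro a b ⟨u, hu, hbu⟩
        obtain ⟨⟨J, hJ⟩, _⟩ := hc hu
        exact ⟨u, hu, hJ ▸ J.mul_conj_mem a (hJ ▸ hbu)⟩
      · rintro a b ⟨u, hu, hbu⟩
        obtain ⟨⟨J, hJ⟩, _⟩ := hc hu
        exact ⟨u, hu, hJ ▸ J.lam_mem a (hJ ▸ hbu)⟩
    · -- the union is proper
      intro huniv
      have hTsub : (↑T : Set A) ⊆ ⋃₀ c := huniv ▸ Set.subset_univ _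
      obtain ⟨u, hu, hTu⟩ := finset_subset_of_directed hd hcne T hTsub
      obtain ⟨⟨J, hJ⟩, hune⟩ := hc hu
      apply hune
      apply Set.eq_univ_of_univ_subset
      rw [← hT, ← hJ]
      exact genIdeal_subset (hJ ▸ hTu)

end SkewBrace

end Aux

open SkewBrace in
/-- for `A` of finite weight, a subset `S` generates `A` as an ideal
iff its image in `A/Rad(A)` generates `A/Rad(A)`; in particular
`ω(A) = ω(A/Rad(A))` (the quotient is presented as a surjective brace
homomorphism with kernel `Rad(A)`). -/
theorem generates_iff_generates_mod_radical (A B : Type*) [SkewBrace A] [SkewBrace B]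
    (hw : weight A ≠ ⊤) (f : BraceHom A B) (hf : Function.Surjective f.toFun)
    (hker : f.ker = radical A) :
    (∀ S : Set A, genIdeal S = Set.univ ↔ genIdeal (f.toFun '' S) = Set.univ) ∧
    weight A = weight B := by
  classical
  have hfg : ∃ T : Finset A, genIdeal (↑T : Set A) = Set.univ := exists_finite_gen hw
  -- the main generation equivalence
  have hgen : ∀ S : Set A, genIdeal S = Set.univ ↔ genIdeal (f.toFun '' S) = Set.univ := by
    intro S
    constructor
    · intro h
      ext b
      simp only [Set.mem_univ, iff_true]
      intro J hJ
      obtain ⟨a, rfl⟩ := hf b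
      have ha : a ∈ genIdeal S := h ▸ Set.mem_univ a
      have hsub : S ⊆ (SkewBrace.Ideal.comap f J).carrier := fun s hs => hJ ⟨s, hs, rfl⟩
      exact ha (SkewBrace.Ideal.comap f J) hsub
    · intro h
      by_contra hne
      obtain ⟨M, hM, hIM⟩ := exists_maximal hfg (SkewBrace.Ideal.gen S) hne
      apply hM.1
      apply Set.eq_univ_of_forall
      intro a
      -- decompose a = x + r with x ∈ genIdeal S and r ∈ radical A
      have hb : f.toFun a ∈ genIdeal (f.toFun '' S) := h ▸ Set.mem_univ _
      -- the image of `genIdeal S` under `f` is an ideal of `B`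
      let Jimg : Ideal B :=
        { carrier := f.toFun '' genIdeal S
          zero_mem := ⟨0, (SkewBrace.Ideal.gen S).zero_mem, f.map_zero⟩
          add_mem := by
            rintro _ _ ⟨x, hx, rfl⟩ ⟨y, hy, rfl⟩
            exact ⟨x + y, (SkewBrace.Ideal.gen S).add_mem hx hy, f.map_add' x y⟩
          neg_mem := by
            rintro _ ⟨x, hx, rfl⟩
            exact ⟨-x, (SkewBrace.Ideal.gen S).neg_mem hx, f.map_neg x⟩
          add_conj_mem := by
            rintro b _ ⟨x, hx, rfl⟩
            obtain ⟨c, rfl⟩ := hf b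
            exact ⟨c + x + -c, (SkewBrace.Ideal.gen S).add_conj_mem c hx,
              by rw [f.map_add', f.map_add', f.map_neg]⟩
          mul_conj_mem := by
            rintro b _ ⟨x, hx, rfl⟩
            obtain ⟨c, rfl⟩ := hf b
            exact ⟨c * x * c⁻¹, (SkewBrace.Ideal.gen S).mul_conj_mem c hx,
              by rw [f.map_mul', f.map_mul', f.map_inv]⟩
          lam_mem := by
            rintro b _ ⟨x, hx, rfl⟩
            obtain ⟨c, rfl⟩ := hf b
            exact ⟨lam c x, (SkewBrace.Ideal.gen S).lam_mem c hx, f.map_lam c x⟩ }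
      have hJS : f.toFun '' S ⊆ Jimg.carrier :=
        Set.image_mono (subset_genIdeal S)
      obtain ⟨x, hx, hfx⟩ := hb Jimg hJS
      have hr : -x + a ∈ radical A := by
        rw [← hker]
        show f.toFun (-x + a) = 0
        rw [f.map_add', f.map_neg, hfx, neg_add_cancel]
      have hxM : x ∈ M.carrier := hIM hx
      have hrM : -x + a ∈ M.carrier := hr M hM
      have := M.add_mem hxM hrM
      rwa [add_neg_cancel_left] at this
  refine ⟨hgen, ?_⟩
  by_cases hsA : Subsingleton A
  · have hsB : Subsingleton B := by
      constructor
      intro x y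
      obtain ⟨a, rfl⟩ := hf x
      obtain ⟨b, rfl⟩ := hf y
      rw [Subsingleton.elim a b]
    unfold weight
    rw [if_pos hsA, if_pos hsB]
  · have hsB : ¬Subsingleton B := by
      intro hsB
      have hrad : radical A = Set.univ := by
        rw [← hker]
        apply Set.eq_univ_of_forall
        intro a
        exact Subsingleton.elim _ _
      have hzero : (SkewBrace.Ideal.zero A).carrier ≠ Set.univ := by
        intro h
        apply hsA
        constructor
        intro x y
        have hx : x ∈ (SkewBrace.Ideal.zero A).carrier := by rw [h]; trivial
        have hy : y ∈ (SkewBrace.Ideal.zero A).carrier := by rw [h]; trivial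
        have hx0 : x = 0 := hx
        have hy0 : y = 0 := hy
        rw [hx0, hy0]
      obtain ⟨M, hM, _⟩ := exists_maximal hfg (SkewBrace.Ideal.zero A) hzero
      apply hM.1
      apply Set.eq_univ_of_univ_subset
      rw [← hrad]
      intro r hr
      exact hr M hM
    unfold weight
    rw [if_neg hsA, if_neg hsB]
    apply le_antisymm
    · -- lift a generating finset of B to A
      apply le_iInf
      intro T
      apply le_iInf
      intro hT
      set g := Function.surjInv hf with hg
      set S : Finset A := T.image g with hS
      have hfS : f.toFun '' (↑S : Set A) = ↑T := by
        rw [hS, Finset.coe_image, Set.image_image]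
        simp [hg, Function.surjInv_eq hf]
      have hSgen : genIdeal (↑S : Set A) = Set.univ := (hgen ↑S).mpr (by rw [hfS]; exact hT)
      calc (⨅ (S' : Finset A) (_ : genIdeal (↑S' : Set A) = Set.univ), (S'.card : ℕ∞))
          ≤ (S.card : ℕ∞) := iInf₂_le S hSgen
        _ ≤ (T.card : ℕ∞) := by exact_mod_cast Finset.card_image_le
    · -- push a generating finset of A to B
      apply le_iInf
      intro S
      apply le_iInf
      intro hS
      set T : Finset B := S.image f.toFun with hT
      have hfS : f.toFun '' (↑S : Set A) = ↑T := by rw [hT, Finset.coe_image]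
      have hTgen : genIdeal (↑T : Set B) = Set.univ := by
        rw [← hfS]; exact (hgen ↑S).mp hS
      calc (⨅ (T' : Finset B) (_ : genIdeal (↑T' : Set B) = Set.univ), (T'.card : ℕ∞))
          ≤ (T.card : ℕ∞) := iInf₂_le T hTgen
        _ ≤ (S.card : ℕ∞) := by exact_mod_cast Finset.card_image_le
end
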